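/- arXiv:1305.5947 — 2 statements merged into one kernel-verified Lean document; each statement's English description precedes it below -/
import Mathlib

section
/- For an integer p ≥ 2 and a nonnegative integer d, Σ_{0 ≤ N ≤ d/(p+1)} r_p(N,N) ≤ r_p(d,d) ≤ Σ_{0 ≤ N ≤ d/p} r_p(N,N). -/
/-!
Removing the first part `m₀` of a sequence counted by `r_p(d,d)` leaves a sequence of weighted
sum `N` with `d = m₀ + pN` and first part at most `m₀ = d - pN`, and every such sequence extends
back uniquely. Hence `r_p(d,d) = Σ_{0 ≤ N ≤ d/p} r_p(N, d - pN)`. Each summand is at most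
`r_p(N,N)`, and at least `r_p(N,N)` as soon as `N ≤ d - pN`, i.e. `N ≤ d/(p+1)`.
-/

/-- `r_p(M,d)`: the number of finitely supported nonincreasing sequences `m` of nonnegative
integers with `m 0 ≤ d` and `Σ m_i p^i = M`. -/
noncomputable def rp (p : ℤ) (M d : ℤ) : ℕ :=
  {m : ℕ →₀ ℤ | (∀ i, 0 ≤ m i) ∧ (∀ i, m (i + 1) ≤ m i) ∧ m 0 ≤ d ∧
    (m.sum fun i a => a * p ^ i) = M}.ncard

namespace Finsupp

variable {M : Type*}

noncomputable def natCons [AddZeroClass M] (a : M) (f : ℕ →₀ M) : ℕ →₀ M :=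
  single 0 a + embDomain (addRightEmbedding 1) f

noncomputable def natTail [Zero M] (f : ℕ →₀ M) : ℕ →₀ M :=
  comapDomain (· + 1) f (add_left_injective 1).injOn

@[simp] lemma natTail_apply [Zero M] (f : ℕ →₀ M) (i : ℕ) : natTail f i = f (i + 1) := rfl

variable [AddZeroClass M]

@[simp] lemma natCons_zero (a : M) (f : ℕ →₀ M) : natCons a f 0 = a := by
  rw [natCons, add_apply, single_eq_same, embDomain_of_notMem_range, add_zero]
  rintro ⟨i, hi⟩
  exact Nat.succ_ne_zero i hi

@[simp] lemma natCons_succ (a : M) (f : ℕ →₀ M) (i : ℕ) : natCons a f (i + 1) = f i := by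
  rw [natCons, add_apply, single_eq_of_ne (by omega), zero_add]
  exact embDomain_apply_self (addRightEmbedding 1) f i

@[simp] lemma natTail_natCons (a : M) (f : ℕ →₀ M) : natTail (natCons a f) = f := by
  ext i; simp

@[simp] lemma natCons_natTail (f : ℕ →₀ M) : natCons (f 0) (natTail f) = f := by
  ext (_ | i) <;> simp

lemma natCons_injective (a : M) : Function.Injective (natCons a) :=
  Function.LeftInverse.injective (natTail_natCons a)

lemma sum_natCons {N : Type*} [AddCommMonoid N] (a : M) (f : ℕ →₀ M) (g : ℕ → M → N)
    (h_zero : ∀ i, g i 0 = 0) (h_add : ∀ i x y, g i (x + y) = g i x + g i y) :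
    (natCons a f).sum g = g 0 a + f.sum fun i x => g (i + 1) x := by
  rw [natCons, sum_add_index' h_zero h_add, sum_single_index (h_zero 0), sum_embDomain]
  rfl

end Finsupp

open Finset Finsupp

def weightedSum (p : ℤ) (m : ℕ →₀ ℤ) : ℤ := m.sum fun i a => a * p ^ i

def rpSet (p M d : ℤ) : Set (ℕ →₀ ℤ) :=
  {m | (∀ i, 0 ≤ m i) ∧ (∀ i, m (i + 1) ≤ m i) ∧ m 0 ≤ d ∧ weightedSum p m = M}

lemma rp_eq_ncard_rpSet (p M d : ℤ) : rp p M d = (rpSet p M d).ncard := rfl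

lemma weightedSum_natCons (p a : ℤ) (m : ℕ →₀ ℤ) :
    weightedSum p (natCons a m) = a + p * weightedSum p m := by
  rw [weightedSum, weightedSum, sum_natCons _ _ _ (fun _ => zero_mul _) (fun _ _ _ => add_mul ..),
    Finsupp.mul_sum]
  simp only [pow_zero, mul_one, pow_succ]
  congr 1
  exact Finsupp.sum_congr fun i _ => by ring

section weightedSum

variable {p : ℤ} {m : ℕ →₀ ℤ}

lemma weightedSum_nonneg (hp : 0 ≤ p) (hm : ∀ i, 0 ≤ m i) : 0 ≤ weightedSum p m :=
  Finset.sum_nonneg fun i _ => mul_nonneg (hm i) (pow_nonneg hp i)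

lemma apply_le_weightedSum (hp : 1 ≤ p) (hm : ∀ i, 0 ≤ m i) (i : ℕ) : m i ≤ weightedSum p m := by
  have h_term : m i ≤ m i * p ^ i := le_mul_of_one_le_right (hm i) (one_le_pow₀ hp)
  by_cases hi : i ∈ m.support
  · exact h_term.trans (single_le_sum (fun j _ => mul_nonneg (hm j) (pow_nonneg (by omega) j)) hi)
  · rw [notMem_support_iff.mp hi]
    exact weightedSum_nonneg (by omega) hm

lemma lt_weightedSum_of_ne_zero (hp : 1 ≤ p) (hm : ∀ i, 0 ≤ m i) (hm_anti : ∀ i, m (i + 1) ≤ m i)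
    {i : ℕ} (hi : m i ≠ 0) : (i : ℤ) < weightedSum p m := by
  have h_ge : ∀ j ≤ i, 1 ≤ m j := fun j hj =>
    (lt_of_le_of_ne (hm i) (Ne.symm hi)).trans_le (antitone_nat_of_succ_le hm_anti hj)
  have h_support : range (i + 1) ⊆ m.support := fun j hj =>
    mem_support_iff.mpr (by have := h_ge j (by simpa [Nat.lt_succ_iff] using hj); omega)
  calc (i : ℤ) < ∑ _j ∈ range (i + 1), 1 := by simp
    _ ≤ ∑ j ∈ range (i + 1), m j * p ^ j :=
      sum_le_sum fun j hj => one_le_mul_of_one_le_of_one_le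
        (h_ge j (by simpa [Nat.lt_succ_iff] using hj)) (one_le_pow₀ hp)
    _ ≤ weightedSum p m :=
      sum_le_sum_of_subset_of_nonneg h_support fun j _ _ =>
        mul_nonneg (hm j) (pow_nonneg (by omega) j)

end weightedSum

section rpSet

variable {p : ℤ}

/-- Here `t ∈ rpSet p (weightedSum p t) a` only says that `t` is nonnegative, nonincreasing and
bounded by `a`. -/
lemma natCons_mem_rpSet_iff {M d a : ℤ} {t : ℕ →₀ ℤ} :
    natCons a t ∈ rpSet p M d ↔
      0 ≤ a ∧ t ∈ rpSet p (weightedSum p t) a ∧ a ≤ d ∧ a + p * weightedSum p t = M := by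
  simp only [rpSet, Set.mem_ofPred_eq, weightedSum_natCons, natCons_zero, and_true]
  constructor
  · rintro ⟨h_nonneg, h_anti, h_le, h_sum⟩
    exact ⟨by simpa using h_nonneg 0, ⟨fun i => by simpa using h_nonneg (i + 1),
      fun i => by simpa using h_anti (i + 1), by simpa using h_anti 0⟩, h_le, h_sum⟩
  · rintro ⟨h_head, ⟨h_nonneg, h_anti, h_le⟩, h_le_d, h_sum⟩
    refine ⟨fun i => ?_, fun i => ?_, h_le_d, h_sum⟩
    · cases i with
      | zero => simpa using h_head
      | succ i => simpa using h_nonneg i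
    · cases i with
      | zero => simpa using h_le
      | succ i => simpa using h_anti i

lemma rpSet_finite (hp : 1 ≤ p) (M d : ℤ) : (rpSet p M d).Finite := by
  let bound : ℕ →₀ ℤ := Finsupp.indicator (range M.toNat) fun _ _ => M
  refine (Set.finite_Icc 0 bound).subset
    fun m ⟨h_nonneg, h_anti, _, h_sum⟩ => ⟨h_nonneg, fun i => ?_⟩
  by_cases hi : i < M.toNat
  · simpa [bound, hi, h_sum] using apply_le_weightedSum hp h_nonneg i
  · have : m i = 0 := by
      by_contra h
      have := lt_weightedSum_of_ne_zero hp h_nonneg h_anti h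
      omega
    simp [bound, hi, this]

lemma rp_mono (hp : 1 ≤ p) (M : ℤ) {d e : ℤ} (h : d ≤ e) : rp p M d ≤ rp p M e :=
  Set.ncard_le_ncard
    (fun _ ⟨h_nonneg, h_anti, h_le, h_sum⟩ => ⟨h_nonneg, h_anti, h_le.trans h, h_sum⟩)
    (rpSet_finite hp M e)

lemma rp_le_rp_self (hp : 1 ≤ p) (M d : ℤ) : rp p M d ≤ rp p M M :=
  Set.ncard_le_ncard (fun _ ⟨h_nonneg, h_anti, _, h_sum⟩ =>
      ⟨h_nonneg, h_anti, h_sum ▸ apply_le_weightedSum hp h_nonneg 0, h_sum⟩)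
    (rpSet_finite hp M M)

end rpSet

lemma rpSet_self_eq_biUnion {p : ℕ} (hp : 0 < p) (d : ℕ) :
    rpSet p d d = ⋃ N ∈ Icc 0 (d / p), natCons ((d : ℤ) - p * N) '' rpSet p N (d - p * N) := by
  ext m
  simp only [Set.mem_iUnion, Set.mem_image, mem_Icc, zero_le, true_and, exists_prop]
  constructor
  · intro hm
    rw [← natCons_natTail m, natCons_mem_rpSet_iff] at hm
    obtain ⟨h_head, h_tail, -, h_sum⟩ := hm
    have h_tail_nonneg : 0 ≤ weightedSum p (natTail m) :=
      weightedSum_nonneg (by positivity) h_tail.1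
    lift weightedSum p (natTail m) to ℕ using h_tail_nonneg with N hN
    have h_head_eq : m 0 = d - p * N := by linarith
    refine ⟨N, (Nat.le_div_iff_mul_le hp).mpr ?_, natTail m, ?_, ?_⟩
    · exact_mod_cast (show (N : ℤ) * p ≤ d by linarith)
    · rw [← h_head_eq]; exact h_tail
    · rw [← h_head_eq, natCons_natTail]
  · rintro ⟨N, -, t, ht, rfl⟩
    have h_sum : weightedSum p t = N := ht.2.2.2
    rw [natCons_mem_rpSet_iff, h_sum]
    have h_shift : (0 : ℤ) ≤ p * N := by positivity
    exact ⟨(ht.1 0).trans ht.2.2.1, ht, by linarith, by ring⟩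

lemma rp_self_eq_sum {p : ℕ} (hp : 0 < p) (d : ℕ) :
    rp p d d = ∑ N ∈ Icc 0 (d / p), rp p N (d - p * N) := by
  have h_finite : ∀ N ∈ (Icc 0 (d / p) : Set ℕ),
      (natCons ((d : ℤ) - p * N) '' rpSet p N (d - p * N)).Finite :=
    fun N _ => (rpSet_finite (by exact_mod_cast hp) _ _).image _
  have h_disjoint : (Icc 0 (d / p) : Set ℕ).PairwiseDisjoint
      fun N => natCons ((d : ℤ) - p * N) '' rpSet p N (d - p * N) := by
    intro N _ N' _ hNN'
    refine Set.disjoint_left.mpr ?_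
    rintro _ ⟨t, ht, rfl⟩ ⟨t', ht', h_eq⟩
    have := congrArg (weightedSum p ∘ natTail) h_eq
    simp only [Function.comp_apply, natTail_natCons, ht.2.2.2, ht'.2.2.2] at this
    exact hNN' (by exact_mod_cast this.symm)
  rw [rp_eq_ncard_rpSet, rpSet_self_eq_biUnion hp]
  refine (((finite_toSet _).ncard_biUnion h_finite h_disjoint).trans
    (finsum_mem_coe_finset _ _)).trans ?_
  exact sum_congr rfl fun N _ => Set.ncard_image_of_injective _ (natCons_injective _)

/-- `Σ_{0 ≤ N ≤ d/(p+1)} r_p(N,N) ≤ r_p(d,d) ≤ Σ_{0 ≤ N ≤ d/p} r_p(N,N)`. -/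
theorem stmt_3 (p : ℕ) (hp : 2 ≤ p) (d : ℕ) :
    (∑ N ∈ Finset.Icc 0 (d / (p + 1)), rp p (N : ℤ) (N : ℤ)) ≤ rp p (d : ℤ) (d : ℤ) ∧
    rp p (d : ℤ) (d : ℤ) ≤ ∑ N ∈ Finset.Icc 0 (d / p), rp p (N : ℤ) (N : ℤ) := by
  have hp_pos : 0 < p := by omega
  have hp_one : (1 : ℤ) ≤ p := by exact_mod_cast hp_pos
  rw [rp_self_eq_sum hp_pos d]
  constructor
  · calc ∑ N ∈ Icc 0 (d / (p + 1)), rp p N N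
        ≤ ∑ N ∈ Icc 0 (d / (p + 1)), rp p N (d - p * N) := by
          refine sum_le_sum fun N hN => ?_
          apply rp_mono hp_one
          have h_mul : (N : ℤ) * (p + 1) ≤ d := by
            exact_mod_cast (Nat.le_div_iff_mul_le (by omega)).mp (mem_Icc.mp hN).2
          linarith
      _ ≤ ∑ N ∈ Icc 0 (d / p), rp p N (d - p * N) := by
          apply sum_le_sum_of_subset
          exact Icc_subset_Icc_right (Nat.div_le_div_left (by omega) hp_pos)
  · refine sum_le_sum fun N _ => ?_
    apply rp_le_rp_self hp_one
end

section
/- For integers q ≥ 2 and real x ≥ q, F_q(x) ≥ x^{(log_q(x)−3)/2} / Γ(log_q(x) + 1), where F_q(x) = Σ_{n≥0} x^n/(n!·q^{n(n+1)/2}) and Γ is the Gamma function. -/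
/-! Keep only the term of index `n = ⌊log_q x⌋` of the series. With `L = log_q x`, so that
`x = q ^ L` and `n ≤ L < n + 1`, monotonicity of `Γ` on `[2, ∞)` gives `n! ≤ Γ(L + 1)`, and
`q ^ (n(n+1)/2) ≤ q ^ (L(L+1)/2) = x ^ ((L+1)/2)`; finally `x ^ n ≥ x ^ (L-1)`. -/

/-- `F_q(x) = Σ_{n≥0} x^n/(n!·q^{n(n+1)/2})`. -/
noncomputable def Fq (q : ℕ) (x : ℝ) : ℝ :=
  ∑' n : ℕ, x ^ n / (n.factorial * (q : ℝ) ^ (n * (n + 1) / 2))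

open Real

lemma summable_Fq_term {q : ℕ} (hq : 1 ≤ q) (x : ℝ) :
    Summable fun n : ℕ => x ^ n / (n.factorial * (q : ℝ) ^ (n * (n + 1) / 2)) := by
  refine Summable.of_norm_bounded (Real.summable_pow_div_factorial |x|) fun n => ?_
  rw [norm_div, norm_pow, Real.norm_eq_abs, norm_of_nonneg (by positivity)]
  gcongr
  exact le_mul_of_one_le_right (Nat.cast_nonneg _) (one_le_pow₀ (by exact_mod_cast hq))

lemma Fq_term_le {q : ℕ} (hq : 1 ≤ q) {x : ℝ} (hx : 0 ≤ x) (n : ℕ) :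
    x ^ n / (n.factorial * (q : ℝ) ^ (n * (n + 1) / 2)) ≤ Fq q x :=
  (summable_Fq_term hq x).le_tsum n fun _ _ => by positivity

lemma factorial_le_Gamma {n : ℕ} {s : ℝ} (hn : 1 ≤ n) (hns : (n : ℝ) ≤ s) :
    (n.factorial : ℝ) ≤ Gamma (s + 1) := by
  have hn' : (1 : ℝ) ≤ n := by exact_mod_cast hn
  rw [← Gamma_nat_eq_factorial]
  exact Gamma_strictMonoOn_Ici.monotoneOn (Set.mem_Ici.mpr (by linarith))
    (Set.mem_Ici.mpr (by linarith)) (by linarith)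

lemma cast_mul_succ_div_two (n : ℕ) :
    ((n * (n + 1) / 2 : ℕ) : ℝ) = n * (n + 1) / 2 := by
  rw [Nat.cast_div (Nat.even_mul_succ_self n).two_dvd two_ne_zero]
  push_cast
  ring

lemma pow_mul_succ_div_two_le_rpow {b : ℝ} (hb : 1 ≤ b) {n : ℕ} {s : ℝ} (hns : (n : ℝ) ≤ s) :
    b ^ (n * (n + 1) / 2) ≤ b ^ (s * (s + 1) / 2) := by
  rw [← rpow_natCast, cast_mul_succ_div_two]
  exact rpow_le_rpow_of_exponent_le hb (by nlinarith [(Nat.cast_nonneg n : (0 : ℝ) ≤ n)])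

/-- for `q ≥ 2` and `x ≥ q`,
`F_q(x) ≥ x^{(log_q(x)−3)/2} / Γ(log_q(x) + 1)`. -/
theorem stmt_11 (q : ℕ) (hq : 2 ≤ q) (x : ℝ) (hx : (q : ℝ) ≤ x) :
    x ^ ((Real.logb q x - 3) / 2) / Real.Gamma (Real.logb q x + 1) ≤ Fq q x := by
  have hq1 : (1 : ℝ) < q := by exact_mod_cast hq
  have hx1 : 1 ≤ x := hq1.le.trans hx
  have hx0 : 0 < x := one_pos.trans_le hx1
  set L := logb q x
  have hL1 : 1 ≤ L := by
    simpa [L, logb_self_eq_one hq1] using logb_le_logb_of_le hq1 (by positivity) hx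
  set n := ⌊L⌋₊
  have hnL : (n : ℝ) ≤ L := Nat.floor_le (by linarith)
  have hLn : L < n + 1 := Nat.lt_floor_add_one L
  have hq_pow : (q : ℝ) ^ (n * (n + 1) / 2) ≤ x ^ ((L + 1) / 2) := by
    calc (q : ℝ) ^ (n * (n + 1) / 2) ≤ (q : ℝ) ^ (L * (L + 1) / 2) :=
          pow_mul_succ_div_two_le_rpow hq1.le hnL
      _ = x ^ ((L + 1) / 2) := by
          rw [mul_div_assoc, rpow_mul (by positivity), rpow_logb (by positivity) hq1.ne' hx0]
  calc x ^ ((L - 3) / 2) / Gamma (L + 1)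
      ≤ x ^ ((n : ℝ) - (L + 1) / 2) / Gamma (L + 1) := by
        gcongr
        linarith
    _ = x ^ n / (Gamma (L + 1) * x ^ ((L + 1) / 2)) := by
        rw [rpow_sub hx0, rpow_natCast, div_div, mul_comm]
    _ ≤ x ^ n / (n.factorial * (q : ℝ) ^ (n * (n + 1) / 2)) := by
        gcongr
        exact factorial_le_Gamma (Nat.le_floor (by exact_mod_cast hL1)) hnL
    _ ≤ Fq q x := Fq_term_le (by omega) hx0.le n
end
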